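/- arXiv:2301.01639 — 3 statements merged into one kernel-verified Lean document; each statement's English description precedes it below -/
import Mathlib

section
/- Let N ≥ 1, Θ ∈ (0,∞)^N, and let Y : ℤ^N → ℝ be any function. Define ΔY_k = Σ_{i ∈ {0,1}^N} (−1)^{Σ_l i_l} Y(k_1−i_1, …, k_N−i_N), and define G : ℤ^N → ℝ by G_t = Σ_{k_1 = 1−t_2−…−t_N}^{t_1} Σ_{k_2 = 1−k_1−t_3−…−t_N}^{t_2} ⋯ Σ_{k_N = 1−k_1−…−k_{N−1}}^{t_N} e^{−⟨k,Θ⟩} ΔY_k when Σ_{l=1}^N t_l ≥ 1, and G_t = (−1)^N Σ_{k_1 = t_1+1}^{−t_2−…−t_N−N+1} Σ_{k_2 = t_2+1}^{−k_1−t_3−…−t_N−N+2} ⋯ Σ_{k_N = t_N+1}^{−k_1−…−k_{N−1}} e^{−⟨k,Θ⟩} ΔY_k when Σ_{l=1}^N t_l ≤ 0 (empty sums being zero). Then G_t = 0 for every t ∈ ℤ^N with Σ_{l=1}^N t_l ∈ {0, −1, …, −N+1}. -/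
open MeasureTheory Filter

noncomputable section

/-- Two families of real random variables indexed by `ℤ^N` have the same
finite-dimensional distributions. -/
def HasSameFDD {Ω : Type*} [MeasurableSpace Ω] {N : ℕ} (μ : Measure Ω)
    (X Y : (Fin N → ℤ) → Ω → ℝ) : Prop :=
  ∀ (n : ℕ) (t : Fin n → (Fin N → ℤ)),
    μ.map (fun ω i => X (t i) ω) = μ.map (fun ω i => Y (t i) ω)

/-- A random field on `ℤ^N` is stationary if every shift leaves the
finite-dimensional distributions unchanged. -/
def IsStationaryField {Ω : Type*} [MeasurableSpace Ω] {N : ℕ} (μ : Measure Ω)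
    (X : (Fin N → ℤ) → Ω → ℝ) : Prop :=
  ∀ s : Fin N → ℤ, HasSameFDD μ (fun t => X (t + s)) X

/-- A random field `Y` on `ℤ^N` is `Θ`-self-similar if `(Y_{t+s})_t` equals
`(e^{⟨s,Θ⟩} Y_t)_t` in finite-dimensional distributions for every `s`. -/
def IsSelfSimilar {Ω : Type*} [MeasurableSpace Ω] {N : ℕ} (μ : Measure Ω)
    (Θ : Fin N → ℝ) (Y : (Fin N → ℤ) → Ω → ℝ) : Prop :=
  ∀ s : Fin N → ℤ, HasSameFDD μ (fun t => Y (t + s))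
    (fun t ω => Real.exp (∑ l, (s l : ℝ) * Θ l) * Y t ω)

/-- The square increment `Δ_t X = Σ_{i ∈ {0,1}^N} (−1)^{Σ_l i_l} X_{t−i}`. -/
def sqInc {N : ℕ} (X : (Fin N → ℤ) → ℝ) (t : Fin N → ℤ) : ℝ :=
  ∑ i : Fin N → Bool,
    (-1 : ℝ) ^ ((∑ l, if i l then 1 else 0 : ℕ)) *
      X (fun l => t l - if i l then 1 else 0)

/-- A field has stationary (rectangular) increments if its square-increment
field is stationary. -/
def HasStationaryIncrements {Ω : Type*} [MeasurableSpace Ω] {N : ℕ} (μ : Measure Ω)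
    (G : (Fin N → ℤ) → Ω → ℝ) : Prop :=
  IsStationaryField μ (fun t ω => sqInc (fun u => G u ω) t)

/-- The inner product `⟨Θ̂, X̂⁻_t⟩ = Σ_{i ∈ {0,1}^N, i ≠ 0} (−1)^{1+Σ_l i_l}
e^{−⟨i,Θ⟩} X_{t−i}`. -/
def prevInner {N : ℕ} (Θ : Fin N → ℝ) (X : (Fin N → ℤ) → ℝ) (t : Fin N → ℤ) : ℝ :=
  ∑ i ∈ Finset.univ.filter (fun i : Fin N → Bool => i ≠ fun _ => false),
    (-1 : ℝ) ^ ((1 + ∑ l, if i l then 1 else 0 : ℕ)) *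
      (Real.exp (-∑ l, (if i l then (1 : ℝ) else 0) * Θ l) *
        X (fun l => t l - if i l then 1 else 0))

/-- Iterated limit in probability `lim_{M₁→∞} ⋯ lim_{M_k→∞} F(M₁,…,M_k) = Z`:
the innermost limit is over the last variable, the outermost over the first. -/
def IterLimInProb {Ω : Type*} [MeasurableSpace Ω] (μ : Measure Ω) :
    (k : ℕ) → ((Fin k → ℕ) → Ω → ℝ) → (Ω → ℝ) → Prop
  | 0, F, Z => ∀ ω, F (fun i => i.elim0) ω = Z ω
  | k + 1, F, Z => ∃ H : ℕ → Ω → ℝ,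
      (∀ M₁ : ℕ, IterLimInProb μ k (fun M => F (Fin.cons M₁ M)) (H M₁)) ∧
      TendstoInMeasure μ H atTop Z

/-- The class `𝒢_Θ`: stationary increment fields `G` vanishing on
`Σ_l t_l ∈ {0,−1,…,−N+1}` such that the iterated limit (in probability)
`lim_{M₁→∞}⋯lim_{M_N→∞} Σ_{j₁=−M₁}^{t₁}⋯Σ_{j_N=−M_N}^{t_N} e^{⟨j,Θ⟩} Δ_j G`
exists as an (almost surely finite, real-valued) random variable for every `t`. -/
def MemClassG {Ω : Type*} [MeasurableSpace Ω] {N : ℕ} (μ : Measure Ω)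
    (Θ : Fin N → ℝ) (G : (Fin N → ℤ) → Ω → ℝ) : Prop :=
  HasStationaryIncrements μ G ∧
  (∀ t : Fin N → ℤ, -(N : ℤ) + 1 ≤ ∑ l, t l → (∑ l, t l) ≤ 0 → ∀ ω, G t ω = 0) ∧
  (∀ t : Fin N → ℤ, ∃ Z : Ω → ℝ,
    IterLimInProb μ N (fun M ω =>
      ∑ j ∈ Finset.Icc (fun l => -(M l : ℤ)) t,
        Real.exp (∑ l, (j l : ℝ) * Θ l) * sqInc (fun u => G u ω) j) Z)

/-- The iterated (chained) sum
`Σ_{k₁ = c − t₂ − … − t_N}^{t₁} Σ_{k₂ = c − k₁ − t₃ − … − t_N}^{t₂} ⋯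
 Σ_{k_N = c − k₁ − … − k_{N−1}}^{t_N} f(k)`, with empty ranges contributing `0`. -/
def iterSumPos : (n : ℕ) → ℤ → (Fin n → ℤ) → ((Fin n → ℤ) → ℝ) → ℝ
  | 0, _, _, f => f (fun i => i.elim0)
  | n + 1, c, t, f =>
      ∑ k ∈ Finset.Icc (c - ∑ l : Fin n, t l.succ) (t 0),
        iterSumPos n (c - k) (fun l => t l.succ) (fun j => f (Fin.cons k j))

/-- The iterated (chained) sum
`Σ_{k₁ = t₁+1}^{c − t₂ − … − t_N − N + 1} Σ_{k₂ = t₂+1}^{c − k₁ − t₃ − … − t_N − N + 2} ⋯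
 Σ_{k_N = t_N+1}^{c − k₁ − … − k_{N−1}} f(k)`, with empty ranges contributing `0`. -/
def iterSumNeg : (n : ℕ) → ℤ → (Fin n → ℤ) → ((Fin n → ℤ) → ℝ) → ℝ
  | 0, _, _, f => f (fun i => i.elim0)
  | n + 1, c, t, f =>
      ∑ k ∈ Finset.Icc (t 0 + 1) (c - (∑ l : Fin n, t l.succ) - (n : ℤ)),
        iterSumNeg n (c - k) (fun l => t l.succ) (fun j => f (Fin.cons k j))

/-- The field `G` built from a (deterministic realisation of a) field `Y`:
for `Σ_l t_l ≥ 1` it is the chained sum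
`Σ_{k₁ = 1−t₂−…−t_N}^{t₁} ⋯ Σ_{k_N = 1−k₁−…−k_{N−1}}^{t_N} e^{−⟨k,Θ⟩} Δ_k Y`,
and for `Σ_l t_l ≤ 0` it is
`(−1)^N Σ_{k₁ = t₁+1}^{−t₂−…−t_N−N+1} ⋯ Σ_{k_N = t_N+1}^{−k₁−…−k_{N−1}} e^{−⟨k,Θ⟩} Δ_k Y`. -/
def lampertiG {N : ℕ} (Θ : Fin N → ℝ) (Y : (Fin N → ℤ) → ℝ) (t : Fin N → ℤ) : ℝ :=
  if 1 ≤ ∑ l, t l then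
    iterSumPos N 1 t (fun k => Real.exp (-∑ l, (k l : ℝ) * Θ l) * sqInc Y k)
  else
    (-1 : ℝ) ^ N *
      iterSumNeg N 0 t (fun k => Real.exp (-∑ l, (k l : ℝ) * Θ l) * sqInc Y k)

theorem iterSumNeg_succ_eq_zero_of_le (n : ℕ) (c : ℤ) (t : Fin (n + 1) → ℤ)
    (f : (Fin (n + 1) → ℤ) → ℝ) (h : c - n ≤ ∑ l, t l) :
    iterSumNeg (n + 1) c t f = 0 := by
  rw [Fin.sum_univ_succ] at h
  rw [iterSumNeg, Finset.Icc_eq_empty (by omega), Finset.sum_empty]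

theorem lampertiG_vanishes_general {N : ℕ} (hN : 1 ≤ N) (Θ : Fin N → ℝ)
    (Y : (Fin N → ℤ) → ℝ) (t : Fin N → ℤ)
    (h1 : -(N : ℤ) + 1 ≤ ∑ l, t l) (h2 : (∑ l, t l) ≤ 0) :
    lampertiG Θ Y t = 0 := by
  obtain ⟨n, rfl⟩ : ∃ n, N = n + 1 := ⟨N - 1, by omega⟩
  push_cast at h1
  rw [lampertiG, if_neg (by omega), iterSumNeg_succ_eq_zero_of_le n 0 t _ (by omega),
    mul_zero]

/-- Lemma gG (i): the field `G` built from `Y` via the chained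
sums vanishes for every `t` with `Σ_l t_l ∈ {0, −1, …, −N+1}`. -/
theorem lampertiG_vanishes {N : ℕ} (hN : 1 ≤ N) (Θ : Fin N → ℝ)
    (hΘ : ∀ l, 0 < Θ l) (Y : (Fin N → ℤ) → ℝ) (t : Fin N → ℤ)
    (h1 : -(N : ℤ) + 1 ≤ ∑ l, t l) (h2 : (∑ l, t l) ≤ 0) :
    lampertiG Θ Y t = 0 :=
  lampertiG_vanishes_general hN Θ Y t h1 h2
end
end

section
/- Let N ≥ 1, Θ ∈ (0,∞)^N, and let Y = (Y_t)_{t∈ℤ^N} be a Θ-self-similar random field. Define the random field G by G_t = Σ_{k_1 = 1−t_2−…−t_N}^{t_1} Σ_{k_2 = 1−k_1−t_3−…−t_N}^{t_2} ⋯ Σ_{k_N = 1−k_1−…−k_{N−1}}^{t_N} e^{−⟨k,Θ⟩} Δ_k Y when Σ_{l=1}^N t_l ≥ 1, and G_t = (−1)^N Σ_{k_1 = t_1+1}^{−t_2−…−t_N−N+1} Σ_{k_2 = t_2+1}^{−k_1−t_3−…−t_N−N+2} ⋯ Σ_{k_N = t_N+1}^{−k_1−…−k_{N−1}} e^{−⟨k,Θ⟩}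 Δ_k Y when Σ_{l=1}^N t_l ≤ 0 (empty sums being zero). Then G has stationary increments, i.e. the increment field (Δ_t G)_{t∈ℤ^N} is stationary. -/
open MeasureTheory Filter

noncomputable section

/-!
For `Σ t ≥ 1` the chained sum defining `G_t` enumerates, coordinate by coordinate, the finite
set `{k ≤ t, Σ k ≥ 1}`, and for `Σ t ≤ 0` the set `{k > t, Σ k ≤ 0}`; one of the two is empty,
so `G_t = Σ_{k ≤ t, Σ k ≥ 1} f k + (-1)^N Σ_{k > t, Σ k ≤ 0} f k` with
`f k = e^{-⟨k,Θ⟩} Δ_k Y`. Near `t` both sums are sums over a fixed finite set weighted by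
products of one-dimensional indicators, and the square increment of such a product is the
product of the one-dimensional differences, which is `[k = t]` (resp. `-[k = t]`). Hence
`Δ_t G = e^{-⟨t,Θ⟩} Δ_t Y` pathwise, so `Δ_{t+s} G = e^{-⟨t+s,Θ⟩} Δ_t (Y_{·+s})`, and
self-similarity replaces `Y_{·+s}` by `e^{⟨s,Θ⟩} Y`, which gives back `Δ_t G`.
-/

open Finset

section SqInc

variable {N : ℕ}

lemma sqInc_congr {X X' : (Fin N → ℤ) → ℝ} {t : Fin N → ℤ}
    (h : ∀ i : Fin N → Bool,
      X (fun l => t l - if i l then 1 else 0) = X' (fun l => t l - if i l then 1 else 0)) :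
    sqInc X t = sqInc X' t :=
  sum_congr rfl fun i _ => by rw [h i]

lemma sqInc_add (X X' : (Fin N → ℤ) → ℝ) (t : Fin N → ℤ) :
    sqInc (fun u => X u + X' u) t = sqInc X t + sqInc X' t := by
  simp only [sqInc, mul_add, sum_add_distrib]

lemma sqInc_const_mul (r : ℝ) (X : (Fin N → ℤ) → ℝ) (t : Fin N → ℤ) :
    sqInc (fun u => r * X u) t = r * sqInc X t := by
  simp only [sqInc, mul_sum, mul_left_comm]

lemma sqInc_sum {ι : Type*} (s : Finset ι) (X : ι → (Fin N → ℤ) → ℝ) (t : Fin N → ℤ) :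
    sqInc (fun u => ∑ k ∈ s, X k u) t = ∑ k ∈ s, sqInc (X k) t := by
  simp only [sqInc, mul_sum]
  exact sum_comm

lemma sqInc_comp_add_right (X : (Fin N → ℤ) → ℝ) (s t : Fin N → ℤ) :
    sqInc (fun u => X (u + s)) t = sqInc X (t + s) := by
  refine sum_congr rfl fun i _ => congrArg _ (congrArg X (funext fun l => ?_))
  simp only [Pi.add_apply]
  ring

lemma sqInc_prod (h : Fin N → ℤ → ℝ) (t : Fin N → ℤ) :
    sqInc (fun u => ∏ l, h l (u l)) t = ∏ l, (h l (t l) - h l (t l - 1)) := by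
  have hl : ∀ l, h l (t l) - h l (t l - 1)
      = ∑ b : Bool, (if b then (-1 : ℝ) else 1) * h l (t l - if b then 1 else 0) := by
    intro l
    simp [sub_eq_add_neg, add_comm]
  rw [prod_congr rfl fun l _ => hl l, Fintype.prod_sum]
  refine sum_congr rfl fun i _ => ?_
  rw [prod_mul_distrib, ← prod_pow_eq_pow_sum]
  congr 1
  exact prod_congr rfl fun l _ => by cases i l <;> simp

lemma sqInc_sum_mul_prod {ι : Type*} (U : Finset ι) (g : ι → ℝ) (φ : ι → Fin N → ℤ → ℝ)
    (t : Fin N → ℤ) :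
    sqInc (fun u => ∑ k ∈ U, g k * ∏ l, φ k l (u l)) t
      = ∑ k ∈ U, g k * ∏ l, (φ k l (t l) - φ k l (t l - 1)) := by
  simp only [sqInc_sum, sqInc_const_mul, sqInc_prod]

lemma prod_ite_apply_eq (k t : Fin N → ℤ) :
    (∏ l, if k l = t l then (1 : ℝ) else 0) = if k = t then 1 else 0 := by
  simp only [prod_boole, mem_univ, true_implies, funext_iff]

lemma sqInc_sum_mul_indicator_le (U : Finset (Fin N → ℤ)) (g : (Fin N → ℤ) → ℝ)
    (t : Fin N → ℤ) :
    sqInc (fun u => ∑ k ∈ U, g k * ∏ l, if k l ≤ u l then 1 else 0) t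
      = if t ∈ U then g t else 0 := by
  have hstep : ∀ a b : ℤ,
      ((if a ≤ b then 1 else 0) - if a ≤ b - 1 then 1 else 0 : ℝ) = if a = b then 1 else 0 := by
    intro a b
    split_ifs <;> first | omega | norm_num
  rw [sqInc_sum_mul_prod U g (fun k l b => if k l ≤ b then 1 else 0)]
  simp only [hstep, prod_ite_apply_eq, mul_ite, mul_one, mul_zero, sum_ite_eq']

lemma sqInc_sum_mul_indicator_lt (U : Finset (Fin N → ℤ)) (g : (Fin N → ℤ) → ℝ)
    (t : Fin N → ℤ) :
    sqInc (fun u => ∑ k ∈ U, g k * ∏ l, if u l < k l then 1 else 0) t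
      = (-1) ^ N * if t ∈ U then g t else 0 := by
  have hstep : ∀ a b : ℤ,
      ((if b < a then 1 else 0) - if b - 1 < a then 1 else 0 : ℝ) = -if a = b then 1 else 0 := by
    intro a b
    split_ifs <;> first | omega | norm_num
  rw [sqInc_sum_mul_prod U g (fun k l b => if b < k l then 1 else 0)]
  simp only [hstep, prod_neg, prod_ite_apply_eq, card_univ, Fintype.card_fin, mul_ite, mul_one,
    mul_zero, sum_ite_eq']
  split_ifs <;> ring

end SqInc

section Box

variable {n : ℕ}

def posBox (n : ℕ) (c : ℤ) (t : Fin n → ℤ) : Finset (Fin n → ℤ) :=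
  (Icc (fun l => c - ∑ j, t j + t l) t).filter fun k => c ≤ ∑ l, k l

def negBox (n : ℕ) (c : ℤ) (t : Fin n → ℤ) : Finset (Fin n → ℤ) :=
  (Icc (fun l => t l + 1) (fun l => c - ∑ j, t j + t l + 1 - n)).filter fun k => ∑ l, k l ≤ c

lemma sub_le_sum_sub_sum {k t : Fin n → ℤ} (h : k ≤ t) (l : Fin n) :
    t l - k l ≤ ∑ j, t j - ∑ j, k j := by
  rw [← sum_sub_distrib]
  exact single_le_sum (f := fun j => t j - k j) (fun j _ => sub_nonneg.2 (h j)) (mem_univ l)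

lemma mem_posBox {c : ℤ} {t k : Fin n → ℤ} : k ∈ posBox n c t ↔ k ≤ t ∧ c ≤ ∑ l, k l := by
  simp only [posBox, mem_filter, mem_Icc]
  refine ⟨fun h => ⟨h.1.2, h.2⟩, fun h => ⟨⟨fun l => ?_, h.1⟩, h.2⟩⟩
  have := sub_le_sum_sub_sum h.1 l
  linarith [h.2]

lemma mem_negBox {c : ℤ} {t k : Fin n → ℤ} :
    k ∈ negBox n c t ↔ (∀ l, t l < k l) ∧ ∑ l, k l ≤ c := by
  have hlt : (∀ l, t l < k l) ↔ (fun l => t l + 1) ≤ k := by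
    simp only [Pi.le_def, Int.add_one_le_iff]
  simp only [negBox, mem_filter, mem_Icc, hlt]
  refine ⟨fun h => ⟨h.1.1, h.2⟩, fun h => ⟨⟨h.1, fun l => ?_⟩, h.2⟩⟩
  have := sub_le_sum_sub_sum h.1 l
  simp only [sum_add_distrib, sum_const, card_univ, Fintype.card_fin, nsmul_eq_mul,
    mul_one] at this
  linarith [h.2]

lemma posBox_eq_empty {c : ℤ} {t : Fin n → ℤ} (h : ∑ l, t l < c) : posBox n c t = ∅ :=
  eq_empty_of_forall_notMem fun k hk => by
    obtain ⟨hkt, hc⟩ := mem_posBox.1 hk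
    have := sum_le_sum fun l (_ : l ∈ univ) => hkt l
    omega

lemma negBox_eq_empty {c : ℤ} {t : Fin n → ℤ} (h : c < ∑ l, t l + n) :
    negBox n c t = ∅ :=
  eq_empty_of_forall_notMem fun k hk => by
    obtain ⟨htk, hc⟩ := mem_negBox.1 hk
    have := sum_le_sum fun l (_ : l ∈ univ) => Int.add_one_le_iff.2 (htk l)
    simp only [sum_add_distrib, sum_const, card_univ, Fintype.card_fin, nsmul_eq_mul,
      mul_one] at this
    omega

lemma sum_posBox_eq_sum_mul_indicator {c : ℤ} {u t : Fin n → ℤ} (hut : u ≤ t)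
    (g : (Fin n → ℤ) → ℝ) :
    ∑ k ∈ posBox n c u, g k = ∑ k ∈ posBox n c t, g k * ∏ l, if k l ≤ u l then 1 else 0 := by
  simp only [prod_boole, mem_univ, true_implies, mul_ite, mul_one, mul_zero, ← sum_filter]
  refine sum_congr (ext fun k => ?_) fun _ _ => rfl
  simp only [mem_filter, mem_posBox, ← Pi.le_def]
  exact ⟨fun h => ⟨⟨h.1.trans hut, h.2⟩, h.1⟩, fun h => ⟨h.2, h.1.2⟩⟩

lemma sum_negBox_eq_sum_mul_indicator {c : ℤ} {t u : Fin n → ℤ} (htu : t ≤ u)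
    (g : (Fin n → ℤ) → ℝ) :
    ∑ k ∈ negBox n c u, g k = ∑ k ∈ negBox n c t, g k * ∏ l, if u l < k l then 1 else 0 := by
  simp only [prod_boole, mem_univ, true_implies, mul_ite, mul_one, mul_zero, ← sum_filter]
  refine sum_congr (ext fun k => ?_) fun _ _ => rfl
  simp only [mem_filter, mem_negBox]
  exact ⟨fun h => ⟨⟨fun l => (htu l).trans_lt (h.1 l), h.2⟩, h.1⟩, fun h => ⟨h.2, h.1.2⟩⟩

lemma sqInc_sum_posBox (c : ℤ) (g : (Fin n → ℤ) → ℝ) (t : Fin n → ℤ) :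
    sqInc (fun u => ∑ k ∈ posBox n c u, g k) t = if c ≤ ∑ l, t l then g t else 0 := by
  rw [sqInc_congr (X' := fun u => ∑ k ∈ posBox n c t, g k * ∏ l, if k l ≤ u l then 1 else 0)
      fun i => sum_posBox_eq_sum_mul_indicator (fun l => by dsimp only; split_ifs <;> omega) g,
    sqInc_sum_mul_indicator_le]
  simp only [mem_posBox, le_refl, true_and]

lemma sqInc_sum_negBox (c : ℤ) (g : (Fin n → ℤ) → ℝ) (t : Fin n → ℤ) :
    sqInc (fun u => ∑ k ∈ negBox n c u, g k) t
      = (-1) ^ n * if ∑ l, t l ≤ c then g t else 0 := by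
  rw [sqInc_congr
      (X' := fun u => ∑ k ∈ negBox n c (fun l => t l - 1), g k * ∏ l, if u l < k l then 1 else 0)
      fun i => sum_negBox_eq_sum_mul_indicator (fun l => by dsimp only; split_ifs <;> omega) g,
    sqInc_sum_mul_indicator_lt]
  simp only [mem_negBox, sub_one_lt, implies_true, true_and]

end Box

lemma sum_sum_cons_eq_sum {α M : Type*} [AddCommMonoid M] {n : ℕ} {s : Finset α}
    {T : α → Finset (Fin n → α)} {B : Finset (Fin (n + 1) → α)}
    (hB : ∀ K, K ∈ B ↔ K 0 ∈ s ∧ Fin.tail K ∈ T (K 0)) (f : (Fin (n + 1) → α) → M) :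
    ∑ a ∈ s, ∑ j ∈ T a, f (Fin.cons a j) = ∑ K ∈ B, f K := by
  rw [sum_sigma']
  refine sum_nbij' (fun p => Fin.cons p.1 p.2) (fun K => ⟨K 0, Fin.tail K⟩) ?_ ?_ ?_ ?_
    fun _ _ => rfl
  · rintro ⟨a, j⟩ h
    simpa [hB] using h
  · intro K h
    simpa [hB] using h
  · rintro ⟨a, j⟩ _
    simp
  · intro K _
    exact Fin.cons_self_tail K

section IterSum

variable {n : ℕ}

lemma mem_posBox_succ {c : ℤ} {t K : Fin (n + 1) → ℤ} :
    K ∈ posBox (n + 1) c t ↔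
      K 0 ∈ Icc (c - ∑ l : Fin n, t l.succ) (t 0) ∧
        Fin.tail K ∈ posBox n (c - K 0) (Fin.tail t) := by
  simp only [mem_posBox, mem_Icc, Fin.sum_univ_succ, Pi.le_def, Fin.forall_fin_succ, Fin.tail]
  constructor
  · rintro ⟨⟨h0, hs⟩, hc⟩
    have := sum_le_sum fun l (_ : l ∈ univ) => hs l
    exact ⟨⟨by omega, h0⟩, hs, by omega⟩
  · rintro ⟨⟨_, h0⟩, hs, hc⟩
    exact ⟨⟨h0, hs⟩, by omega⟩

lemma mem_negBox_succ {c : ℤ} {t K : Fin (n + 1) → ℤ} :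
    K ∈ negBox (n + 1) c t ↔
      K 0 ∈ Icc (t 0 + 1) (c - ∑ l : Fin n, t l.succ - n) ∧
        Fin.tail K ∈ negBox n (c - K 0) (Fin.tail t) := by
  simp only [mem_negBox, mem_Icc, Fin.sum_univ_succ, Fin.forall_fin_succ, Fin.tail]
  constructor
  · rintro ⟨⟨h0, hs⟩, hc⟩
    have := sum_le_sum fun l (_ : l ∈ univ) => Int.add_one_le_iff.2 (hs l)
    simp only [sum_add_distrib, sum_const, card_univ, Fintype.card_fin, nsmul_eq_mul,
      mul_one] at this
    exact ⟨⟨h0, by omega⟩, hs, by omega⟩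
  · rintro ⟨⟨h0, _⟩, hs, hc⟩
    exact ⟨⟨h0, hs⟩, by omega⟩

lemma iterSumPos_eq_sum_posBox (c : ℤ) (t : Fin n → ℤ) (f : (Fin n → ℤ) → ℝ)
    (hc : n = 0 → c ≤ 0) : iterSumPos n c t f = ∑ k ∈ posBox n c t, f k := by
  induction n generalizing c with
  | zero =>
    have hbox : posBox 0 c t = {fun i => i.elim0} :=
      eq_singleton_iff_unique_mem.2
        ⟨mem_posBox.2 ⟨fun i => i.elim0, by simpa using hc rfl⟩, fun _ _ => Subsingleton.elim _ _⟩
    rw [iterSumPos, hbox, sum_singleton]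
  | succ n ih =>
    rw [iterSumPos, ← sum_sum_cons_eq_sum (T := fun k => posBox n (c - k) (Fin.tail t))
      fun K => mem_posBox_succ]
    refine sum_congr rfl fun k hk => ih _ _ _ fun hn => ?_
    subst hn
    simp only [mem_Icc, univ_eq_empty, sum_empty] at hk
    omega

lemma iterSumNeg_eq_sum_negBox (c : ℤ) (t : Fin n → ℤ) (f : (Fin n → ℤ) → ℝ)
    (hc : n = 0 → 0 ≤ c) : iterSumNeg n c t f = ∑ k ∈ negBox n c t, f k := by
  induction n generalizing c with
  | zero =>
    have hbox : negBox 0 c t = {fun i => i.elim0} :=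
      eq_singleton_iff_unique_mem.2
        ⟨mem_negBox.2 ⟨fun i => i.elim0, by simpa using hc rfl⟩, fun _ _ => Subsingleton.elim _ _⟩
    rw [iterSumNeg, hbox, sum_singleton]
  | succ n ih =>
    rw [iterSumNeg, ← sum_sum_cons_eq_sum (T := fun k => negBox n (c - k) (Fin.tail t))
      fun K => mem_negBox_succ]
    refine sum_congr rfl fun k hk => ih _ _ _ fun hn => ?_
    subst hn
    simp only [mem_Icc, univ_eq_empty, sum_empty, Nat.cast_zero] at hk
    omega

end IterSum

section Lamperti

variable {N : ℕ} (Θ : Fin N → ℝ) (Y : (Fin N → ℤ) → ℝ)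

lemma lampertiG_eq_sum_posBox_add_sum_negBox (t : Fin N → ℤ) :
    lampertiG Θ Y t
      = ∑ k ∈ posBox N 1 t, Real.exp (-∑ l, (k l : ℝ) * Θ l) * sqInc Y k
        + (-1) ^ N * ∑ k ∈ negBox N 0 t, Real.exp (-∑ l, (k l : ℝ) * Θ l) * sqInc Y k := by
  unfold lampertiG
  split_ifs with h
  · have hN : N ≠ 0 := by rintro rfl; simp at h
    rw [iterSumPos_eq_sum_posBox _ _ _ fun h0 => absurd h0 hN, negBox_eq_empty (by omega),
      sum_empty, mul_zero, add_zero]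
  · rw [iterSumNeg_eq_sum_negBox _ _ _ fun _ => le_rfl, posBox_eq_empty (by omega), sum_empty,
      zero_add]

lemma sqInc_lampertiG (t : Fin N → ℤ) :
    sqInc (lampertiG Θ Y) t = Real.exp (-∑ l, (t l : ℝ) * Θ l) * sqInc Y t := by
  rw [funext (lampertiG_eq_sum_posBox_add_sum_negBox Θ Y), sqInc_add, sqInc_sum_posBox,
    sqInc_const_mul, sqInc_sum_negBox, ← mul_assoc, ← pow_add, (Even.add_self N).neg_one_pow,
    one_mul]
  split_ifs <;> first | omega | simp

end Lamperti

section FDD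

variable {Ω : Type*} [MeasurableSpace Ω] {μ : Measure Ω} {N : ℕ}
  {X X' : (Fin N → ℤ) → Ω → ℝ}

lemma HasSameFDD.map_comp (h : HasSameFDD μ X X') (hX : ∀ t, Measurable (X t))
    (hX' : ∀ t, Measurable (X' t)) {m : ℕ} (p : Fin m → Fin N → ℤ) {β : Type*}
    [MeasurableSpace β] {Φ : (Fin m → ℝ) → β} (hΦ : Measurable Φ) :
    μ.map (fun ω => Φ fun a => X (p a) ω) = μ.map (fun ω => Φ fun a => X' (p a) ω) := by
  have := congrArg (Measure.map Φ) (h m p)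
  rwa [Measure.map_map hΦ (measurable_pi_lambda _ fun a => hX (p a)),
    Measure.map_map hΦ (measurable_pi_lambda _ fun a => hX' (p a))] at this

lemma HasSameFDD.const_mul (h : HasSameFDD μ X X') (hX : ∀ t, Measurable (X t))
    (hX' : ∀ t, Measurable (X' t)) (c : (Fin N → ℤ) → ℝ) :
    HasSameFDD μ (fun t ω => c t * X t ω) (fun t ω => c t * X' t ω) := fun _ t =>
  h.map_comp hX hX' t (Φ := fun v i => c (t i) * v i) (by fun_prop)

lemma measurable_sqInc (hX : ∀ t, Measurable (X t)) (t : Fin N → ℤ) :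
    Measurable fun ω => sqInc (X · ω) t :=
  Finset.measurable_sum _ fun _ _ => (hX _).const_mul _

lemma HasSameFDD.sqInc (h : HasSameFDD μ X X') (hX : ∀ t, Measurable (X t))
    (hX' : ∀ t, Measurable (X' t)) :
    HasSameFDD μ (fun t ω => sqInc (X · ω) t) (fun t ω => sqInc (X' · ω) t) := by
  intro n t
  let e := Fintype.equivFin (Fin n × (Fin N → Bool))
  let p : Fin (Fintype.card (Fin n × (Fin N → Bool))) → Fin N → ℤ := fun a l =>
    t (e.symm a).1 l - if (e.symm a).2 l then 1 else 0
  let Φ : (Fin (Fintype.card (Fin n × (Fin N → Bool))) → ℝ) → Fin n → ℝ := fun v i =>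
    ∑ j : Fin N → Bool, (-1 : ℝ) ^ ((∑ l, if j l then 1 else 0 : ℕ)) * v (e (i, j))
  have hrepr : ∀ Z : (Fin N → ℤ) → Ω → ℝ,
      (fun ω i => _root_.sqInc (Z · ω) (t i)) = fun ω => Φ fun a => Z (p a) ω := by
    intro Z
    funext ω i
    simp only [Φ, p, Equiv.symm_apply_apply, _root_.sqInc]
  rw [hrepr X, hrepr X']
  exact h.map_comp hX hX' p (by fun_prop)

end FDD

theorem lampertiG_stationary_increments_general {Ω : Type*} [MeasurableSpace Ω]
    (μ : Measure Ω) {N : ℕ}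
    (Θ : Fin N → ℝ)
    (Y : (Fin N → ℤ) → Ω → ℝ) (hmeas : ∀ t, Measurable (Y t))
    (hY : IsSelfSimilar μ Θ Y) :
    HasStationaryIncrements μ (fun t ω => lampertiG Θ (fun u => Y u ω) t) := by
  intro s
  let c : (Fin N → ℤ) → ℝ := fun t => Real.exp (-∑ l, ((t + s) l : ℝ) * Θ l)
  have hshift : ∀ t ω,
      sqInc (lampertiG Θ (Y · ω)) (t + s) = c t * sqInc (fun u => Y (u + s) ω) t :=
    fun t ω => by rw [sqInc_lampertiG, sqInc_comp_add_right (Y · ω)]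
  have hscale : ∀ t ω, sqInc (lampertiG Θ (Y · ω)) t
      = c t * sqInc (fun u => Real.exp (∑ l, (s l : ℝ) * Θ l) * Y u ω) t := by
    intro t ω
    rw [sqInc_lampertiG, sqInc_const_mul, ← mul_assoc, ← Real.exp_add]
    congr 2
    simp only [Pi.add_apply, Int.cast_add, add_mul, sum_add_distrib]
    ring
  simp only [hshift, hscale]
  have hmeas_scaled : ∀ t, Measurable fun ω => Real.exp (∑ l, (s l : ℝ) * Θ l) * Y t ω :=
    fun t => (hmeas t).const_mul _
  exact ((hY s).sqInc (fun t => hmeas _) hmeas_scaled).const_mul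
    (measurable_sqInc fun t => hmeas _) (measurable_sqInc hmeas_scaled) c

/-- Lemma gG (iii): if `Y` is a `Θ`-self-similar random field,
then the field `G` built pathwise from `Y` via the chained sums has stationary
increments. -/
theorem lampertiG_stationary_increments {Ω : Type*} [MeasurableSpace Ω]
    (μ : Measure Ω) [IsProbabilityMeasure μ] {N : ℕ} (hN : 1 ≤ N)
    (Θ : Fin N → ℝ) (hΘ : ∀ l, 0 < Θ l)
    (Y : (Fin N → ℤ) → Ω → ℝ) (hmeas : ∀ t, Measurable (Y t))
    (hY : IsSelfSimilar μ Θ Y) :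
    HasStationaryIncrements μ (fun t ω => lampertiG Θ (fun u => Y u ω) t) :=
  lampertiG_stationary_increments_general μ Θ Y hmeas hY
end
end

section
/- Let N ≥ 1 and let G, G' : ℤ^N → ℝ be functions such that G_t = G'_t = 0 for all t with Σ_{l=1}^N t_l ∈ {0,−1,…,−N+1}, and such that the square increments agree: Δ_t G = Δ_t G' for every t ∈ ℤ^N. Then G_t = G'_t for every t ∈ ℤ^N. Consequently, for fixed Θ ∈ (0,∞)^N, the field G ∈ 𝒢_Θ satisfying the representation X_t = ⟨Θ̂, X̂⁻_t⟩ + Δ_t G of a stationary field X is unique. -/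
open MeasureTheory Filter

noncomputable section

/-!
The difference `H = G - G'` vanishes on the strip `-N < Σ t ≤ 0` and has vanishing square
increments. The relation `Δ_u H = 0` expresses `H` at any one corner of the cube below `u` through
the other corners, whose coordinate sums differ from it by between `1` and `N`. Taking `t` as the
top corner (`u = t`) spreads the vanishing upward from the strip, taking it as the bottom corner
(`u = t + 1`) spreads it downward, by induction on the distance to the strip. The second claim
follows pointwise in `ω`, since the two representations force `Δ G = Δ G'`.
-/

open Finset

/-- The corner `u - i`, `i ∈ {0,1}^N`, written exactly as it occurs in `sqInc`. -/
abbrev cubeCorner {N : ℕ} (u : Fin N → ℤ) (i : Fin N → Bool) : Fin N → ℤ :=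
  fun l => u l - if i l then 1 else 0

@[simp]
lemma cubeCorner_false {N : ℕ} (u : Fin N → ℤ) : cubeCorner u (fun _ => false) = u := by
  ext; simp [cubeCorner]

@[simp]
lemma cubeCorner_true {N : ℕ} (u : Fin N → ℤ) : cubeCorner u (fun _ => true) = u - 1 := by
  ext; simp [cubeCorner]

lemma sum_cubeCorner {N : ℕ} (u : Fin N → ℤ) (i : Fin N → Bool) :
    ∑ l, cubeCorner u i l = ∑ l, u l - #{l | i l} := by
  simp [cubeCorner, sum_sub_distrib, sum_boole]

lemma card_filter_pos_of_ne_const_false {N : ℕ} {i : Fin N → Bool} (hi : i ≠ fun _ => false) :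
    0 < #{l | i l} := by
  obtain ⟨l, hl⟩ := Function.ne_iff.mp hi
  exact card_pos.mpr ⟨l, by simpa using hl⟩

lemma card_filter_lt_of_ne_const_true {N : ℕ} {i : Fin N → Bool} (hi : i ≠ fun _ => true) :
    #{l | i l} < N := by
  obtain ⟨l, hl⟩ := Function.ne_iff.mp hi
  simpa using card_lt_univ_of_notMem (s := {l | i l}) (x := l) (by simpa using hl)

lemma sqInc_sub {N : ℕ} (X Y : (Fin N → ℤ) → ℝ) (t : Fin N → ℤ) :
    sqInc (fun u => X u - Y u) t = sqInc X t - sqInc Y t := by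
  simp only [sqInc, ← sum_sub_distrib, mul_sub]

lemma eq_zero_of_sqInc_eq_zero {N : ℕ} {H : (Fin N → ℤ) → ℝ} {u : Fin N → ℤ}
    (hΔ : sqInc H u = 0) (j : Fin N → Bool)
    (hH : ∀ i ≠ j, H (cubeCorner u i) = 0) : H (cubeCorner u j) = 0 := by
  rw [sqInc, sum_eq_single_of_mem j (mem_univ j)
    (fun i _ hi => by rw [hH i hi, mul_zero])] at hΔ
  exact (mul_eq_zero.mp hΔ).resolve_left (pow_ne_zero _ (by norm_num))

lemma eq_zero_of_sqInc_eq_zero_above_strip {N : ℕ} {H : (Fin N → ℤ) → ℝ}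
    (hstrip : ∀ t : Fin N → ℤ, -(N : ℤ) + 1 ≤ ∑ l, t l → (∑ l, t l) ≤ 0 → H t = 0)
    (hΔ : ∀ t, sqInc H t = 0) (t : Fin N → ℤ) (ht : -(N : ℤ) + 1 ≤ ∑ l, t l) :
    H t = 0 := by
  suffices ∀ k : ℕ, ∀ t : Fin N → ℤ, -(N : ℤ) + 1 ≤ ∑ l, t l → ∑ l, t l ≤ k → H t = 0 from
    this _ t ht (Int.self_le_toNat _)
  intro k
  induction k with
  | zero => exact fun t h₁ h₂ => hstrip t h₁ (by exact_mod_cast h₂)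
  | succ k ih =>
    intro t h₁ h₂
    rcases le_or_gt (∑ l, t l) 0 with hs | hs
    · exact hstrip t h₁ hs
    simpa using eq_zero_of_sqInc_eq_zero (hΔ t) (fun _ => false) fun i hi => by
      have hpos := card_filter_pos_of_ne_const_false hi
      have hle : #{l | i l} ≤ N := card_le_univ _ |>.trans_eq (Fintype.card_fin N)
      apply ih <;> rw [sum_cubeCorner] <;> push_cast at h₂ ⊢ <;> omega

lemma eq_zero_of_sqInc_eq_zero_below_strip {N : ℕ} {H : (Fin N → ℤ) → ℝ}
    (hstrip : ∀ t : Fin N → ℤ, -(N : ℤ) + 1 ≤ ∑ l, t l → (∑ l, t l) ≤ 0 → H t = 0)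
    (hΔ : ∀ t, sqInc H t = 0) (t : Fin N → ℤ) (ht : ∑ l, t l ≤ 0) :
    H t = 0 := by
  suffices ∀ k : ℕ, ∀ t : Fin N → ℤ, -(N : ℤ) + 1 - k ≤ ∑ l, t l → ∑ l, t l ≤ 0 → H t = 0 from
    this ((-∑ l, t l).toNat + 1) t (by push_cast; omega) ht
  intro k
  induction k with
  | zero => exact fun t h₁ h₂ => hstrip t (by simpa using h₁) h₂
  | succ k ih =>
    intro t h₁ h₂
    rcases le_or_gt (-(N : ℤ) + 1 - k) (∑ l, t l) with hs | hs
    · exact ih t hs h₂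
    simpa using
      eq_zero_of_sqInc_eq_zero (hΔ (t + 1)) (fun _ => true) fun i hi => by
        have hlt := card_filter_lt_of_ne_const_true hi
        have hsum := sum_cubeCorner (t + 1) i
        simp only [Pi.add_apply, Pi.one_apply, sum_add_distrib, sum_const,
          card_univ, Fintype.card_fin, nsmul_eq_mul, mul_one] at hsum
        apply ih <;> rw [hsum] <;> push_cast at h₁ ⊢ <;> omega

lemma eq_zero_of_sqInc_eq_zero_of_eq_zero_on_strip {N : ℕ} {H : (Fin N → ℤ) → ℝ}
    (hstrip : ∀ t : Fin N → ℤ, -(N : ℤ) + 1 ≤ ∑ l, t l → (∑ l, t l) ≤ 0 → H t = 0)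
    (hΔ : ∀ t, sqInc H t = 0) (t : Fin N → ℤ) : H t = 0 := by
  rcases le_or_gt (∑ l, t l) 0 with ht | ht
  · exact eq_zero_of_sqInc_eq_zero_below_strip hstrip hΔ t ht
  · exact eq_zero_of_sqInc_eq_zero_above_strip hstrip hΔ t (by omega)

theorem eq_of_sqInc_eq_of_eq_zero_on_strip {N : ℕ} {G G' : (Fin N → ℤ) → ℝ}
    (hG : ∀ t : Fin N → ℤ, -(N : ℤ) + 1 ≤ ∑ l, t l → (∑ l, t l) ≤ 0 → G t = 0)
    (hG' : ∀ t : Fin N → ℤ, -(N : ℤ) + 1 ≤ ∑ l, t l → (∑ l, t l) ≤ 0 → G' t = 0)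
    (hΔ : ∀ t, sqInc G t = sqInc G' t) (t : Fin N → ℤ) : G t = G' t := by
  refine sub_eq_zero.mp (eq_zero_of_sqInc_eq_zero_of_eq_zero_on_strip
    (H := fun u => G u - G' u) (fun u h₁ h₂ => ?_) (fun u => ?_) t)
  · simp [hG u h₁ h₂, hG' u h₁ h₂]
  · rw [sqInc_sub, hΔ, sub_self]

theorem increments_determine_G_general {N : ℕ} :
    (∀ G G' : (Fin N → ℤ) → ℝ,
      (∀ t : Fin N → ℤ, -(N : ℤ) + 1 ≤ ∑ l, t l → (∑ l, t l) ≤ 0 → G t = 0) →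
      (∀ t : Fin N → ℤ, -(N : ℤ) + 1 ≤ ∑ l, t l → (∑ l, t l) ≤ 0 → G' t = 0) →
      (∀ t, sqInc G t = sqInc G' t) →
      ∀ t, G t = G' t) ∧
    (∀ (Ω : Type) [MeasurableSpace Ω] (μ : Measure Ω) [IsProbabilityMeasure μ]
      (Θ : Fin N → ℝ), (∀ l, 0 < Θ l) →
      ∀ (X G G' : (Fin N → ℤ) → Ω → ℝ),
        IsStationaryField μ X →
        MemClassG μ Θ G → MemClassG μ Θ G' →
        (∀ t ω, X t ω = prevInner Θ (fun u => X u ω) t + sqInc (fun u => G u ω) t) →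
        (∀ t ω, X t ω = prevInner Θ (fun u => X u ω) t + sqInc (fun u => G' u ω) t) →
        ∀ t, G t = G' t) := by
  refine ⟨fun G G' => eq_of_sqInc_eq_of_eq_zero_on_strip,
    fun Ω _ μ _ Θ _ X G G' _ hG hG' hrep hrep' t => funext fun ω => ?_⟩
  refine eq_of_sqInc_eq_of_eq_zero_on_strip (fun u h₁ h₂ => hG.2.1 u h₁ h₂ ω)
    (fun u h₁ h₂ => hG'.2.1 u h₁ h₂ ω) (fun u => ?_) t
  linarith [hrep u ω, hrep' u ω]

/-- Lemma guniqueness: if `G, G' : ℤ^N → ℝ` vanish whenever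
`Σ_l t_l ∈ {0,−1,…,−N+1}` and have the same square increments, then `G = G'`.
Consequently, the field `G ∈ 𝒢_Θ` in the representation
`X_t = ⟨Θ̂, X̂⁻_t⟩ + Δ_t G` of a stationary field `X` is unique. -/
theorem increments_determine_G {N : ℕ} (hN : 1 ≤ N) :
    (∀ G G' : (Fin N → ℤ) → ℝ,
      (∀ t : Fin N → ℤ, -(N : ℤ) + 1 ≤ ∑ l, t l → (∑ l, t l) ≤ 0 → G t = 0) →
      (∀ t : Fin N → ℤ, -(N : ℤ) + 1 ≤ ∑ l, t l → (∑ l, t l) ≤ 0 → G' t = 0) →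
      (∀ t, sqInc G t = sqInc G' t) →
      ∀ t, G t = G' t) ∧
    (∀ (Ω : Type) [MeasurableSpace Ω] (μ : Measure Ω) [IsProbabilityMeasure μ]
      (Θ : Fin N → ℝ), (∀ l, 0 < Θ l) →
      ∀ (X G G' : (Fin N → ℤ) → Ω → ℝ),
        IsStationaryField μ X →
        MemClassG μ Θ G → MemClassG μ Θ G' →
        (∀ t ω, X t ω = prevInner Θ (fun u => X u ω) t + sqInc (fun u => G u ω) t) →
        (∀ t ω, X t ω = prevInner Θ (fun u => X u ω) t + sqInc (fun u => G' u ω) t) →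
        ∀ t, G t = G' t) :=
  increments_determine_G_general
end
end
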